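/- Let g' ≥ 1 be an integer, r a positive integer and d' an integer with gcd(r,d') = 1. Define F(t) = (1−t) · P^{ℍ,ev}_{g'}(r,d')(t) for real t > 0 with t ≠ 1. Then for all suchت t one has t^{r²(2g'−1)+1} · F(1/t) = F(t). -/

import Mathlib

open Finset

noncomputable section

/-- `ang x` is `⟨x⟩ = ⌊x⌋ + 1 - x`, the unique element of `(0,1]` with `x + ⟨x⟩ ∈ ℤ`. -/
def ang (x : ℝ) : ℝ := (⌊x⌋ : ℝ) + 1 - x

/-- `M(r₁,…,r_l; λ) = Σ_{i=1}^{l-1} (r_i + r_{i+1}) · ⟨(r₁+⋯+r_i)·λ⟩` for `L = [r₁,…,r_l]`. -/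
def Mfun (L : List ℕ) (lam : ℝ) : ℝ :=
  ∑ i ∈ Finset.range (L.length - 1),
    ((L.getD i 0 : ℝ) + (L.getD (i+1) 0 : ℝ)) * ang (((L.take (i+1)).sum : ℝ) * lam)

/-- `∏_{i=1}^{l-1} (1 - x^{m·(r_i + r_{i+1})})`. -/
def adjProd (x : ℝ) (m : ℕ) (L : List ℕ) : ℝ :=
  ∏ i ∈ Finset.range (L.length - 1), (1 - x ^ (m * (L.getD i 0 + L.getD (i+1) 0)))

/-- `Σ_{1 ≤ i < j ≤ l} r_i r_j`. -/
def pairSum (L : List ℕ) : ℝ :=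
  ∑ i ∈ Finset.range L.length, ∑ j ∈ Finset.Ico (i+1) L.length,
    (L.getD i 0 : ℝ) * (L.getD j 0 : ℝ)

/-- The block factor `∏_{j=1}^{rᵢ}(1+t^{2j-1})^{2g'+1} / (∏_{j=1}^{rᵢ-1}(1-t^{2j}) ∏_{j=1}^{rᵢ}(1-t^{2j}))`. -/
def blockHev (g' : ℕ) (t : ℝ) (ri : ℕ) : ℝ :=
  (∏ j ∈ Finset.range ri, (1 + t ^ (2*j+1)) ^ (2*g'+1)) /
  ((∏ j ∈ Finset.range (ri - 1), (1 - t ^ (2*j+2))) * ∏ j ∈ Finset.range ri, (1 - t ^ (2*j+2)))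

/-- The closed formula `P^{ℍ,ev}_{g'}(r,d)(t)` (quaternionic, even genus `2g'`, no real points). -/
def PHev (g' r : ℕ) (d : ℤ) (t : ℝ) : ℝ :=
  ∑ c : Composition r,
    (-1 : ℝ) ^ (c.length - 1) *
    (t ^ (2 * Mfun c.blocks ((d : ℝ) / (r : ℝ))) / adjProd t 2 c.blocks) *
    t ^ ((2 * (g' : ℝ) - 1) * pairSum c.blocks) *
    (c.blocks.map (blockHev g' t)).prod

/-! Reversing the order of the blocks is an involution of the compositions of `r`, and it matches
each term of `P(1/t)` with `-t^{-r²(2g'-1)}` times a term of `P(t)`. Under `t ↦ 1/t` a block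
factor picks up `-t^{(1-2g')rᵢ²}`; the wall factor `t^{2M}/∏(1 - t^{2(rᵢ+rᵢ₊₁)})` of the reversed
composition becomes that of the original one up to `(-1)^{l-1}`, because `gcd(r,d') = 1` means
that no proper partial sum `s` makes `s·d'/r` an integer, so `⟨(r-s)d'/r⟩ = 1 - ⟨s d'/r⟩`; and
`r² = Σ rᵢ² + 2 Σ_{i<j} rᵢrⱼ` balances the remaining powers of `t`. -/

section InvPow

variable {K : Type*} [Field K] {t : K} {ι : Type*}

lemma prod_one_add_inv_pow (ht : t ≠ 0) (s : Finset ι) (e : ι → ℕ) :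
    ∏ i ∈ s, (1 + t⁻¹ ^ e i) = (∏ i ∈ s, (1 + t ^ e i)) / t ^ ∑ i ∈ s, e i := by
  rw [← prod_pow_eq_pow_sum, ← prod_div_distrib]
  refine prod_congr rfl fun i _ => ?_
  rw [inv_pow]
  field_simp
  ring

lemma prod_one_sub_inv_pow (ht : t ≠ 0) (s : Finset ι) (e : ι → ℕ) :
    ∏ i ∈ s, (1 - t⁻¹ ^ e i) = (-1) ^ #s * (∏ i ∈ s, (1 - t ^ e i)) / t ^ ∑ i ∈ s, e i := by
  rw [← prod_pow_eq_pow_sum, ← prod_const (-1 : K), ← prod_mul_distrib, ← prod_div_distrib]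
  refine prod_congr rfl fun i _ => ?_
  rw [inv_pow]
  field_simp
  ring

end InvPow

lemma sum_range_two_mul_add_one (n : ℕ) : ∑ j ∈ range n, (2 * j + 1) = n ^ 2 := by
  induction n with
  | zero => simp
  | succ n ih => rw [sum_range_succ, ih]; ring

lemma sum_range_two_mul_add_two (n : ℕ) : ∑ j ∈ range n, (2 * j + 2) = n * (n + 1) := by
  induction n with
  | zero => simp
  | succ n ih => rw [sum_range_succ, ih]; ring

lemma blockHev_inv (g' : ℕ) {t : ℝ} (ht : 0 < t) {n : ℕ} (hn : 0 < n) :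
    blockHev g' t⁻¹ n = -t ^ ((1 - 2 * (g' : ℝ)) * n ^ 2) * blockHev g' t n := by
  obtain ⟨m, rfl⟩ := Nat.exists_eq_add_one_of_ne_zero hn.ne'
  unfold blockHev
  rw [prod_pow, prod_one_add_inv_pow ht.ne', prod_one_sub_inv_pow ht.ne',
    prod_one_sub_inv_pow ht.ne', sum_range_two_mul_add_one, sum_range_two_mul_add_two,
    sum_range_two_mul_add_two, card_range, card_range, Nat.add_sub_cancel]
  have hpow : t ^ ((1 - 2 * (g' : ℝ)) * ((m + 1 : ℕ) : ℝ) ^ 2) =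
      t ^ (m * (m + 1)) * t ^ ((m + 1) * (m + 1 + 1)) / (t ^ ((m + 1) ^ 2)) ^ (2 * g' + 1) := by
    rw [← pow_mul, ← pow_add, eq_div_iff (by positivity),
      ← Real.rpow_natCast t ((m + 1) ^ 2 * (2 * g' + 1)),
      ← Real.rpow_natCast t (m * (m + 1) + (m + 1) * (m + 1 + 1)), ← Real.rpow_add ht]
    congr 1
    push_cast
    ring
  rw [hpow, pow_succ (-1 : ℝ) m, div_pow, prod_pow]
  have hD₁ : t ^ (m * (m + 1)) ≠ 0 := by positivity
  have hD₂ : t ^ ((m + 1) * (m + 1 + 1)) ≠ 0 := by positivity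
  have hN : (t ^ ((m + 1) ^ 2)) ^ (2 * g' + 1) ≠ 0 := by positivity
  rcases neg_one_pow_eq_or ℝ m with hs | hs <;> rw [hs] <;> field_simp

lemma sum_range_getD {M : Type*} [AddCommMonoid M] (L : List ℕ) (f : ℕ → M) :
    ∑ i ∈ range L.length, f (L.getD i 0) = (L.map f).sum := by
  induction L with
  | nil => simp
  | cons a L ih =>
    rw [List.length_cons, sum_range_succ', List.map_cons, List.sum_cons, ← ih, add_comm]
    rfl

lemma sq_sum_range {R : Type*} [CommSemiring R] (a : ℕ → R) (n : ℕ) :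
    (∑ i ∈ range n, a i) ^ 2 =
      ∑ i ∈ range n, a i ^ 2 + 2 * ∑ j ∈ range n, ∑ i ∈ range j, a i * a j := by
  induction n with
  | zero => simp
  | succ n ih =>
    rw [sum_range_succ, sum_range_succ, sum_range_succ, add_sq, ih, ← sum_mul]
    ring

lemma sum_range_reverse_adjacent {M : Type*} [AddCommMonoid M] (L : List ℕ)
    (F : ℕ → ℕ → ℕ → M) :
    ∑ i ∈ range (L.length - 1),
        F (L.reverse.getD i 0) (L.reverse.getD (i + 1) 0) (L.reverse.take (i + 1)).sum =
      ∑ i ∈ range (L.length - 1), F (L.getD (i + 1) 0) (L.getD i 0) (L.drop (i + 1)).sum := by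
  rw [← sum_range_reflect]
  refine sum_congr rfl fun i hi => ?_
  have hi : i < L.length - 1 := mem_range.mp hi
  rw [List.getD_reverse _ (by omega), List.getD_reverse _ (by omega), List.take_reverse,
    List.sum_reverse]
  congr 3 <;> omega

lemma prod_range_reverse_adjacent {M : Type*} [CommMonoid M] (L : List ℕ)
    (F : ℕ → ℕ → ℕ → M) :
    ∏ i ∈ range (L.length - 1),
        F (L.reverse.getD i 0) (L.reverse.getD (i + 1) 0) (L.reverse.take (i + 1)).sum =
      ∏ i ∈ range (L.length - 1), F (L.getD (i + 1) 0) (L.getD i 0) (L.drop (i + 1)).sum :=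
  sum_range_reverse_adjacent (M := Additive M) L F

def adjSum (L : List ℕ) : ℕ := ∑ i ∈ range (L.length - 1), (L.getD i 0 + L.getD (i + 1) 0)

lemma adjProd_reverse (x : ℝ) (m : ℕ) (L : List ℕ) : adjProd x m L.reverse = adjProd x m L := by
  unfold adjProd
  rw [List.length_reverse, prod_range_reverse_adjacent L fun a b _ => 1 - x ^ (m * (a + b))]
  simp only [add_comm]

lemma adjProd_inv {t : ℝ} (ht : t ≠ 0) (m : ℕ) (L : List ℕ) :
    adjProd t⁻¹ m L = (-1) ^ (L.length - 1) * adjProd t m L / t ^ (m * adjSum L) := by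
  rw [adjProd, prod_one_sub_inv_pow ht, card_range, adjSum, mul_sum, adjProd]

lemma two_mul_pairSum (L : List ℕ) :
    2 * pairSum L = (L.sum : ℝ) ^ 2 - (L.map fun n : ℕ => (n : ℝ) ^ 2).sum := by
  have h := sq_sum_range (fun i => (L.getD i 0 : ℝ)) L.length
  rw [sum_range_getD L (fun n : ℕ => (n : ℝ)), sum_range_getD L (fun n : ℕ => (n : ℝ) ^ 2),
    ← Nat.cast_list_sum] at h
  rw [h, pairSum, range_eq_Ico, sum_Ico_Ico_comm']
  simp only [Nat.Ico_zero_eq_range]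
  ring

lemma pairSum_reverse (L : List ℕ) : pairSum L.reverse = pairSum L := by
  have h := two_mul_pairSum L.reverse
  rw [List.sum_reverse, List.map_reverse, List.sum_reverse, ← two_mul_pairSum] at h
  linarith

lemma ang_eq_one_sub_fract (x : ℝ) : ang x = 1 - Int.fract x := by
  rw [ang, Int.fract]
  ring

lemma ang_intCast_sub (n : ℤ) {x : ℝ} (hx : Int.fract x ≠ 0) : ang (n - x) = 1 - ang x := by
  rw [ang_eq_one_sub_fract, ang_eq_one_sub_fract, sub_eq_add_neg (n : ℝ), Int.fract_intCast_add,
    Int.fract_neg hx, sub_sub_cancel]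

lemma fract_natCast_mul_div_ne_zero {r s : ℕ} {d : ℤ} (hcop : Int.gcd r d = 1) (hs : 0 < s)
    (hsr : s < r) : Int.fract ((s : ℝ) * (d / r)) ≠ 0 := by
  rw [Ne, Int.fract_eq_zero_iff]
  rintro ⟨n, hn⟩
  have hr : (r : ℝ) ≠ 0 := Nat.cast_ne_zero.mpr (by omega)
  have hsd : (s * d : ℤ) = n * r := by
    field_simp at hn
    exact_mod_cast hn.symm
  have hdvd : (r : ℤ) ∣ s :=
    (Int.isCoprime_iff_gcd_eq_one.mpr hcop).dvd_of_dvd_mul_right ⟨n, by rw [hsd, mul_comm]⟩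
  exact absurd (Nat.le_of_dvd hs (Int.natCast_dvd_natCast.mp hdvd)) hsr.not_ge

lemma sum_take_pos_and_lt_sum {L : List ℕ} (hpos : ∀ n ∈ L, 0 < n) {k : ℕ} (hk0 : 0 < k)
    (hk : k < L.length) : 0 < (L.take k).sum ∧ (L.take k).sum < L.sum := by
  have hsplit := congrArg List.sum (List.take_append_drop k L)
  rw [List.sum_append] at hsplit
  have hdrop : 0 < (L.drop k).sum :=
    List.sum_pos _ (fun n hn => hpos n (List.mem_of_mem_drop hn)) (by simp; omega)
  exact ⟨List.sum_pos _ (fun n hn => hpos n (List.mem_of_mem_take hn))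
    (by rw [← List.length_pos_iff, List.length_take]; omega), by omega⟩

lemma Mfun_reverse {L : List ℕ} (hpos : ∀ n ∈ L, 0 < n) {d : ℤ} (hcop : Int.gcd L.sum d = 1) :
    Mfun L.reverse (d / L.sum) = adjSum L - Mfun L (d / L.sum) := by
  rw [Mfun, List.length_reverse,
    sum_range_reverse_adjacent L fun a b s => ((a : ℝ) + b) * ang (s * (d / L.sum)), Mfun,
    adjSum, Nat.cast_sum, ← sum_sub_distrib]
  refine sum_congr rfl fun i hi => ?_
  have hi : i < L.length - 1 := mem_range.mp hi
  obtain ⟨hs0, hsr⟩ := sum_take_pos_and_lt_sum hpos (k := i + 1) (by omega) (by omega)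
  have hr : (L.sum : ℝ) ≠ 0 := Nat.cast_ne_zero.mpr (by omega)
  have hdrop : ((L.drop (i + 1)).sum : ℝ) = L.sum - (L.take (i + 1)).sum := by
    rw [eq_sub_iff_add_eq', ← Nat.cast_add, ← List.sum_append, List.take_append_drop]
  have hang : ang (((L.drop (i + 1)).sum : ℝ) * (d / L.sum)) =
      1 - ang ((L.take (i + 1)).sum * (d / L.sum)) := by
    rw [← ang_intCast_sub d (fract_natCast_mul_div_ne_zero hcop hs0 hsr), hdrop]
    congr 1
    field_simp
  rw [hang]
  push_cast
  ring

lemma prod_map_blockHev_inv (g' : ℕ) {t : ℝ} (ht : 0 < t) {L : List ℕ}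
    (hpos : ∀ n ∈ L, 0 < n) :
    (L.map (blockHev g' t⁻¹)).prod =
      (-1) ^ L.length * t ^ ((1 - 2 * (g' : ℝ)) * (L.map fun n : ℕ => (n : ℝ) ^ 2).sum) *
        (L.map (blockHev g' t)).prod := by
  induction L with
  | nil => simp
  | cons a L ih =>
    simp only [List.forall_mem_cons] at hpos
    simp only [List.map_cons, List.prod_cons, List.sum_cons, List.length_cons]
    rw [blockHev_inv g' ht hpos.1, ih hpos.2, mul_add, Real.rpow_add ht, pow_succ]
    ring

lemma rpow_Mfun_div_adjProd_reverse_inv {L : List ℕ} (hpos : ∀ n ∈ L, 0 < n) {d : ℤ}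
    (hcop : Int.gcd L.sum d = 1) {t : ℝ} (ht : 0 < t) :
    (-1) ^ (L.length - 1) * (t⁻¹ ^ (2 * Mfun L.reverse (d / L.sum)) / adjProd t⁻¹ 2 L.reverse) =
      t ^ (2 * Mfun L (d / L.sum)) / adjProd t 2 L := by
  have hpow : t⁻¹ ^ (2 * Mfun L.reverse (d / L.sum)) =
      t ^ (2 * Mfun L (d / L.sum)) / t ^ (2 * adjSum L) := by
    rw [Mfun_reverse hpos hcop, Real.inv_rpow ht.le, ← Real.rpow_neg ht.le, ← Real.rpow_natCast,
      ← Real.rpow_sub ht]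
    congr 1
    push_cast
    ring
  rw [hpow, adjProd_reverse, adjProd_inv ht.ne', div_div_div_cancel_right₀ (by positivity)]
  rcases neg_one_pow_eq_or ℝ (L.length - 1) with hs | hs <;> rw [hs] <;> ring

def PHevTerm (g' : ℕ) (lam t : ℝ) (L : List ℕ) : ℝ :=
  (-1 : ℝ) ^ (L.length - 1) * (t ^ (2 * Mfun L lam) / adjProd t 2 L) *
    t ^ ((2 * (g' : ℝ) - 1) * pairSum L) * (L.map (blockHev g' t)).prod

lemma PHev_eq_sum_PHevTerm (g' r : ℕ) (d : ℤ) (t : ℝ) :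
    PHev g' r d t = ∑ c : Composition r, PHevTerm g' (d / r) t c.blocks :=
  rfl

lemma PHevTerm_reverse_inv (g' : ℕ) {L : List ℕ} (hL : L ≠ []) (hpos : ∀ n ∈ L, 0 < n) {d : ℤ}
    (hcop : Int.gcd L.sum d = 1) {t : ℝ} (ht : 0 < t) :
    t ^ ((L.sum : ℝ) ^ 2 * (2 * (g' : ℝ) - 1)) * PHevTerm g' (d / L.sum) t⁻¹ L.reverse =
      -PHevTerm g' (d / L.sum) t L := by
  obtain ⟨m, hm⟩ := Nat.exists_eq_add_one_of_ne_zero (List.length_pos_iff.mpr hL).ne'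
  have hpow : t ^ ((L.sum : ℝ) ^ 2 * (2 * (g' : ℝ) - 1)) *
      t⁻¹ ^ ((2 * (g' : ℝ) - 1) * pairSum L) *
      t ^ ((1 - 2 * (g' : ℝ)) * (L.map fun n : ℕ => (n : ℝ) ^ 2).sum) =
      t ^ ((2 * (g' : ℝ) - 1) * pairSum L) := by
    rw [Real.inv_rpow ht.le, ← Real.rpow_neg ht.le, ← Real.rpow_add ht, ← Real.rpow_add ht]
    congr 1
    linear_combination (1 - 2 * (g' : ℝ)) * two_mul_pairSum L
  rw [PHevTerm, PHevTerm, List.length_reverse, rpow_Mfun_div_adjProd_reverse_inv hpos hcop ht,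
    pairSum_reverse, List.map_reverse, List.prod_reverse, prod_map_blockHev_inv g' ht hpos,
    ← hpow, hm, pow_succ, Nat.add_sub_cancel]
  ring

lemma rpow_mul_PHev_inv (g' : ℕ) {r : ℕ} (hr : 0 < r) {d : ℤ} (hcop : Int.gcd r d = 1) {t : ℝ}
    (ht : 0 < t) : t ^ ((r : ℝ) ^ 2 * (2 * (g' : ℝ) - 1)) * PHev g' r d t⁻¹ = -PHev g' r d t := by
  rw [PHev_eq_sum_PHevTerm, PHev_eq_sum_PHevTerm, mul_sum, ← sum_neg_distrib,
    ← Equiv.sum_comp (Composition.reverse_involutive.toPerm _)]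
  refine sum_congr rfl fun c _ => ?_
  have hc : c.blocks ≠ [] := List.ne_nil_of_length_pos (c.length_pos_of_pos hr)
  have h := PHevTerm_reverse_inv g' hc (fun n => c.blocks_pos) (c.blocks_sum ▸ hcop) ht
  rw [c.blocks_sum] at h
  exact h

theorem stmt5_general (g' r : ℕ) (hr : 0 < r)
    (d' : ℤ) (hcop : Int.gcd (r : ℤ) d' = 1)
    (t : ℝ) (ht : 0 < t) :
    t ^ ((r : ℝ)^2 * (2 * (g' : ℝ) - 1) + 1) * ((1 - 1/t) * PHev g' r d' (1/t)) =
      (1 - t) * PHev g' r d' t := by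
  have h := rpow_mul_PHev_inv g' hr hcop ht
  rw [Real.rpow_add_one ht.ne', one_div]
  generalize PHev g' r d' t⁻¹ = P at h ⊢
  field_simp
  linear_combination (t - 1) * h

/-- Strange Poincaré duality for `(1-t)·P^{ℍ,ev}_{g'}(r,d')`
(Theorem `strange_Poincare_duality_no_real_points` (2)). -/
theorem stmt5 (g' r : ℕ) (hg : 1 ≤ g') (hr : 0 < r)
    (d' : ℤ) (hcop : Int.gcd (r : ℤ) d' = 1)
    (t : ℝ) (ht : 0 < t) (ht1 : t ≠ 1) :
    t ^ ((r : ℝ)^2 * (2 * (g' : ℝ) - 1) + 1) * ((1 - 1/t) * PHev g' r d' (1/t)) =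
      (1 - t) * PHev g' r d' t :=
  stmt5_general g' r hr d' hcop t ht

end
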